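/- Let α ∈ ℂ be a nonzero constant. In the algebra of ℂ-linear endomorphisms of ℂ[x], let D be differentiation and X multiplication by x, and define the Dixmier operators L = (D² + X³ + α)² + 2X and M = (D² + X³ + α)³ + 3X∘D² + 3D + 3X∘(X³ + α). Then M and L satisfy the spectral-curve relation M² = L³ − α. -/
import Mathlib


open Polynomial

/-- The differentiation operator on `ℂ[x]`, as a `ℂ`-linear endomorphism. -/
noncomputable def Dop : Module.End ℂ (Polynomial ℂ) := Polynomial.derivative

/-- The operator of multiplication by `x` on `ℂ[x]`, as a `ℂ`-linear endomorphism. -/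
noncomputable def Xop : Module.End ℂ (Polynomial ℂ) := LinearMap.mulLeft ℂ Polynomial.X

lemma weyl_key {R : Type*} [Ring R] (d x t : R)
    (h : d * x = x * d + 1)
    (A1 : x * t = t * x - (d + d))
    (A2 : d * t = t * d + (x * x + x * x + x * x)) :
    (t*(t*t) + (x*t + x*t + x*t) + (d+d+d))^2
      = (t*t + (x+x))^3 - (t - d*d - x*(x*x)) := by
  have h2 : ∀ c : R, d * (x * c) = x * (d * c) + c := fun c => by
    rw [← mul_assoc, h, add_mul, one_mul, mul_assoc]
  have A1' : ∀ c : R, x * (t * c) = t * (x * c) - (d * c + d * c) := fun c => by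
    rw [← mul_assoc, A1, sub_mul, add_mul, mul_assoc]
  have A2' : ∀ c : R, d * (t * c) = t * (d * c) + (x * (x * c) + x * (x * c) + x * (x * c)) :=
    fun c => by rw [← mul_assoc, A2, add_mul, add_mul, add_mul, mul_assoc, mul_assoc]
  simp only [pow_two, pow_three, mul_add, add_mul, mul_sub, sub_mul, mul_assoc,
    h, h2, A1, A1', A2, A2', mul_one, one_mul]
  noncomm_ring

lemma DX_comm : Dop * Xop = Xop * Dop + 1 := by
  apply LinearMap.ext; intro p
  simp only [Dop, Xop, Module.End.mul_apply, LinearMap.add_apply, Module.End.one_apply,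
    LinearMap.mulLeft_apply, derivative_mul, derivative_X]
  ring

/-- The Dixmier operators `L = (D² + X³ + α)² + 2X` and
`M = (D² + X³ + α)³ + 3X∘D² + 3D + 3X∘(X³ + α)` satisfy the spectral-curve
relation `M² = L³ − α`. -/
theorem dixmier_rank2_spectral_curve (α : ℂ) (hα : α ≠ 0) :
    letI one : Module.End ℂ (Polynomial ℂ) := 1
    letI L : Module.End ℂ (Polynomial ℂ) :=
      (Dop ^ 2 + Xop ^ 3 + α • one) ^ 2 + 2 • Xop
    letI M : Module.End ℂ (Polynomial ℂ) :=
      (Dop ^ 2 + Xop ^ 3 + α • one) ^ 3 + 3 • (Xop * Dop ^ 2) + 3 • Dop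
        + 3 • (Xop * (Xop ^ 3 + α • one))
    M ^ 2 = L ^ 3 - α • one := by
  set d := Dop with hd
  set x := Xop with hx
  set a : Module.End ℂ (Polynomial ℂ) := α • (1 : Module.End ℂ (Polynomial ℂ)) with ha
  have h : d * x = x * d + 1 := DX_comm
  have h2 : ∀ c, d * (x * c) = x * (d * c) + c := fun c => by
    rw [← mul_assoc, h, add_mul, one_mul, mul_assoc]
  have hax : x * a = a * x := by
    rw [ha, mul_smul_comm, smul_mul_assoc, mul_one, one_mul]
  have had : d * a = a * d := by
    rw [ha, mul_smul_comm, smul_mul_assoc, mul_one, one_mul]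
  set t : Module.End ℂ (Polynomial ℂ) := d*d + x*(x*x) + a with ht
  have A1 : x * t = t * x - (d + d) := by
    rw [ht]
    simp only [mul_add, add_mul, mul_assoc, h, h2, hax]
    noncomm_ring
  have A2 : d * t = t * d + (x * x + x * x + x * x) := by
    rw [ht]
    simp only [mul_add, add_mul, mul_assoc, h, h2, had]
    noncomm_ring
  have key := weyl_key d x t h A1 A2
  show ((d ^ 2 + x ^ 3 + a) ^ 3 + 3 • (x * d ^ 2) + 3 • d + 3 • (x * (x ^ 3 + a))) ^ 2
      = ((d ^ 2 + x ^ 3 + a) ^ 2 + 2 • x) ^ 3 - a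
  have e1 : (d ^ 2 + x ^ 3 + a) ^ 3 + 3 • (x * d ^ 2) + 3 • d + 3 • (x * (x ^ 3 + a))
      = t*(t*t) + (x*t + x*t + x*t) + (d+d+d) := by
    rw [ht]; noncomm_ring
  have e2 : (d ^ 2 + x ^ 3 + a) ^ 2 + 2 • x = t*t + (x+x) := by
    rw [ht]; noncomm_ring
  have e3 : t - d*d - x*(x*x) = a := by rw [ht]; noncomm_ring
  rw [e1, e2, key, e3]
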